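/- Fix r ≥ 2. Let φ be an instance of 2-Clause 3-SAT and G(φ) the graph of the r-coloring-number reduction (clause vertices u_i, literal pairs v_j v'_j, (r−1)-subdivided edges from clause vertices to their literals, and a 7-clique w_1,…,w_7 attached as specified). If col_r(G(φ)) ≤ 6, then φ has a satisfying assignment; specifically, the assignment setting x_j true iff v_j <_σ v'_j for a witnessing order σ satisfies φ. -/

import Mathlib

open SimpleGraph

variable {V : Type*}

/-- The strict order relation of a linear order. -/
def olt (σ : LinearOrder V) (a b : V) : Prop := σ.lt a b

/-- The set of vertices `r`-reachable from `u` with respect to `σ`: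
vertices `v >_σ u` joined to `u` by a path of length at most `r`
whose internal vertices all precede `u` in `σ`. -/
def reachSet (G : SimpleGraph V) (σ : LinearOrder V) (r : ℕ) (u : V) : Set V :=
  {v | olt σ u v ∧ ∃ p : G.Walk u v, p.IsPath ∧ p.length ≤ r ∧
    ∀ w ∈ p.support, w ≠ u → w ≠ v → olt σ w u}

/-- The set of vertices weakly `r`-reachable from `u` with respect to `σ`:
vertices `v >_σ u` joined to `u` by a path of length at most `r`
whose internal vertices all precede `v` in `σ`. -/
def wreachSet (G : SimpleGraph V) (σ : LinearOrder V) (r : ℕ) (u : V) : Set V :=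
  {v | olt σ u v ∧ ∃ p : G.Walk u v, p.IsPath ∧ p.length ≤ r ∧
    ∀ w ∈ p.support, w ≠ u → w ≠ v → olt σ w v}

/-- `col_r(G_σ)`: the maximum `r`-reach over all vertices. -/
noncomputable def colOrd [Fintype V] (G : SimpleGraph V) (σ : LinearOrder V) (r : ℕ) : ℕ :=
  Finset.univ.sup fun u => (reachSet G σ r u).ncard

/-- `wcol_r(G_σ)`: the maximum weak `r`-reach over all vertices. -/
noncomputable def wcolOrd [Fintype V] (G : SimpleGraph V) (σ : LinearOrder V) (r : ℕ) : ℕ :=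
  Finset.univ.sup fun u => (wreachSet G σ r u).ncard

/-- The `r`-coloring number of `G`. -/
noncomputable def colNum [Fintype V] (G : SimpleGraph V) (r : ℕ) : ℕ :=
  ⨅ σ : LinearOrder V, colOrd G σ r

/-- The weak `r`-coloring number of `G`. -/
noncomputable def wcolNum [Fintype V] (G : SimpleGraph V) (r : ℕ) : ℕ :=
  ⨅ σ : LinearOrder V, wcolOrd G σ r

/-- `p` is an `r`-qualifying path from `u` with respect to the (possibly partial)
order `lt`: a path of length at most `r` ending at a vertex `v` with `v ≠ u`,
`v` not `<` `u`, all of whose internal vertices are `< u`. -/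
def IsQual (G : SimpleGraph V) (lt : V → V → Prop) (r : ℕ) {u v : V} (p : G.Walk u v) : Prop :=
  p.IsPath ∧ p.length ≤ r ∧ v ≠ u ∧ ¬ lt v u ∧ ∀ w ∈ p.support, w ≠ u → w ≠ v → lt w u

/-- The `r`-backconnectivity of `u`: the maximum number of `r`-qualifying paths from `u`
that are pairwise vertex-disjoint apart from `u`. -/
noncomputable def bcon (G : SimpleGraph V) (lt : V → V → Prop) (r : ℕ) (u : V) : ℕ :=
  sSup {n | ∃ f : Fin n → (v : V) × G.Walk u v,
    (∀ i, IsQual G lt r (f i).2) ∧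
    ∀ i j : Fin n, i ≠ j → ∀ w, w ∈ (f i).2.support → w ∈ (f j).2.support → w = u}

/-- A shortest `r`-qualifying path: an `r`-qualifying `u`–`v` path of length `ℓ` such that
there is no `(ℓ-1)`-qualifying `u`–`v` path. -/
def IsShortQual (G : SimpleGraph V) (lt : V → V → Prop) (r : ℕ) {u v : V} (p : G.Walk u v) :
    Prop :=
  IsQual G lt r p ∧ ¬ ∃ q : G.Walk u v, IsQual G lt (p.length - 1) q

/-- The estimated `r`-backconnectivity of `u`: the maximum number of shortest
`r`-qualifying paths from `u` that are pairwise vertex-disjoint apart from `u`. -/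
noncomputable def est (G : SimpleGraph V) (lt : V → V → Prop) (r : ℕ) (u : V) : ℕ :=
  sSup {n | ∃ f : Fin n → (v : V) × G.Walk u v,
    (∀ i, IsShortQual G lt r (f i).2) ∧
    ∀ i j : Fin n, i ≠ j → ∀ w, w ∈ (f i).2.support → w ∈ (f j).2.support → w = u}

/-- The `r`-admissibility of `G`. -/
noncomputable def admNum [Fintype V] (G : SimpleGraph V) (r : ℕ) : ℕ :=
  ⨅ σ : LinearOrder V, Finset.univ.sup fun u => bcon G (olt σ) r u

/-- `d_v(u, G_σ)`: the least `i` such that `v` is `i`-reachable from `u`. -/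
noncomputable def dval (G : SimpleGraph V) (σ : LinearOrder V) (u v : V) : ℕ :=
  sInf {i | v ∈ reachSet G σ i u}


/-- An instance of 2-Clause 3-SAT: a CNF formula where every clause has at most 3
(distinct) variables, no clause repeats a variable, every clause has at least 2 literals
(single-literal clauses are assumed preprocessed), and each literal (a variable together
with a polarity) appears in exactly 2 clauses. -/
structure TC3SAT where
  n : ℕ
  m : ℕ
  clauses : Fin m → Finset (Fin n × Bool)
  vars_distinct : ∀ i, ∀ l ∈ clauses i, ∀ l' ∈ clauses i, l.1 = l'.1 → l = l'
  clause_le_three : ∀ i, (clauses i).card ≤ 3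
  clause_ge_two : ∀ i, 2 ≤ (clauses i).card
  lit_twice : ∀ l : Fin n × Bool, (Finset.univ.filter fun i => l ∈ clauses i).card = 2

/-- The assignment `A` satisfies the formula `φ`. -/
def TC3SAT.Sat (φ : TC3SAT) (A : Fin φ.n → Bool) : Prop :=
  ∀ i, ∃ l ∈ φ.clauses i, A l.1 = l.2

/-- The formula `φ` is satisfiable. -/
def TC3SAT.Satisfiable (φ : TC3SAT) : Prop := ∃ A, φ.Sat A

/-- Vertices of the `r`-coloring-number reduction graph `G(φ)`: one clause vertex `u i`
per clause, a pair of literal vertices per variable (`v j true` is `v_j`, `v j false` is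
`v'_j`), seven clique vertices `w 0, …, w 6` (representing `w_1, …, w_7`), and for each
occurrence `occ` of a literal in a clause, the `r - 1` internal vertices `s occ t` of the
`(r-1)`-subdivided edge between the clause vertex and the literal vertex. -/
inductive VtxC (r : ℕ) (φ : TC3SAT) where
  | u (i : Fin φ.m)
  | v (j : Fin φ.n) (b : Bool)
  | w (t : Fin 7)
  | s (occ : Σ i : Fin φ.m, {l : Fin φ.n × Bool // l ∈ φ.clauses i}) (t : Fin (r - 1))
  deriving DecidableEq, Fintype

/-- Base relation of the reduction graph: the subdivided edges are realized as paths
`u — s 0 — ⋯ — s (r-2) — v`; `w 0, …, w 6` form a clique; each clause vertex is joined to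
`w 0, …, w 3` (and to `w 4` if its clause has only 2 literals); each positive literal
vertex `v_j` is joined to `w 1, w 2, w 3` and each negative literal vertex `v'_j` to
`w 4, w 5, w 6`. -/
def relC (r : ℕ) (φ : TC3SAT) : VtxC r φ → VtxC r φ → Prop
  | .u i, .s occ t => occ.1 = i ∧ (t : ℕ) = 0
  | .s occ t, .s occ' t' => occ = occ' ∧ (t' : ℕ) = (t : ℕ) + 1
  | .s occ t, .v j b => occ.2.1 = (j, b) ∧ (t : ℕ) + 1 = r - 1
  | .v j _, .v j' _ => j = j'
  | .w _, .w _ => True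
  | .u i, .w t => (t : ℕ) ≤ 3 ∨ ((t : ℕ) = 4 ∧ (φ.clauses i).card = 2)
  | .v _ b, .w t =>
      (b = true ∧ 1 ≤ (t : ℕ) ∧ (t : ℕ) ≤ 3) ∨ (b = false ∧ 4 ≤ (t : ℕ) ∧ (t : ℕ) ≤ 6)
  | _, _ => False

/-- The reduction graph `G(φ)` for the `r`-coloring number. -/
def GC (r : ℕ) (φ : TC3SAT) : SimpleGraph (VtxC r φ) := SimpleGraph.fromRel (relC r φ)

/-!
Fix an order `σ` in which every vertex `r`-reaches at most six vertices, and suppose the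
clause `c_i` is falsified: each of its literal vertices `x` lies above its partner `y`. The
`σ`-least clique vertex `m` reaches the six other clique vertices, so it reaches nothing else;
hence it cannot lie below both `x` and `u_i`, as it would reach `x`, `y` or `u_i`. A literal
vertex `x` below the whole clique reaches `w_2, …, w_7` (directly or through `y`), so it
cannot lie below `u_i`, as it would reach a vertex of its subdivided edge. Either way `u_i`
lies below `m` and below every literal vertex of `c_i`. But then `u_i` reaches its
`7 - |c_i|` clique neighbours and the first vertex above it on each of its `|c_i|` subdivided
edges: seven vertices.
-/

theorem SimpleGraph.exists_isPath_of_adj_succ {G : SimpleGraph V} (f : ℕ → V) (n : ℕ)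
    (hadj : ∀ k < n, G.Adj (f k) (f (k + 1))) (hinj : Set.InjOn f (Set.Iic n)) :
    ∃ p : G.Walk (f 0) (f n), p.IsPath ∧ p.length = n ∧
      ∀ x ∈ p.support, ∃ k ≤ n, f k = x := by
  set L := (List.range (n + 1)).map f
  have hne : L ≠ [] := by simp [L]
  have hchain : L.IsChain G.Adj :=
    (List.isChain_map f).2 ((List.isChain_range_succ _ n).2 hadj)
  have hhead : L.head hne = f 0 := by simp [L, List.head_range]
  have hlast : L.getLast hne = f n := by simp [L, List.getLast_map, List.getLast_range]
  refine ⟨(Walk.ofSupport L hne hchain).copy hhead hlast, ?_, by simp [L], ?_⟩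
  · rw [Walk.isPath_copy, Walk.isPath_def, Walk.support_ofSupport]
    refine List.Nodup.map_on (fun a ha b hb hab => hinj ?_ ?_ hab) List.nodup_range <;>
      simp_all
  · simp [L]

theorem exists_colOrd_eq_colNum [Fintype V] (G : SimpleGraph V) (r : ℕ) :
    ∃ σ : LinearOrder V, colOrd G σ r = colNum G r :=
  have : Nonempty (LinearOrder V) :=
    ⟨LinearOrder.lift' _ (Fintype.equivFin V).injective⟩
  ciInf_mem fun σ => colOrd G σ r

section Reach

variable {G : SimpleGraph V} [σ : LinearOrder V] {r : ℕ} {u v : V}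

theorem mem_reachSet_iff : v ∈ reachSet G σ r u ↔ u < v ∧ ∃ p : G.Walk u v,
    p.IsPath ∧ p.length ≤ r ∧ ∀ w ∈ p.support, w ≠ u → w ≠ v → w < u :=
  Iff.rfl

theorem reachSet_mono {r' : ℕ} (h : r ≤ r') : reachSet G σ r u ⊆ reachSet G σ r' u :=
  fun _ ⟨huv, p, hp, hlen, hint⟩ => ⟨huv, p, hp, hlen.trans h, hint⟩

theorem mem_reachSet_of_adj (hr : 1 ≤ r) (huv : u < v) (h : G.Adj u v) :
    v ∈ reachSet G σ r u := by
  refine mem_reachSet_iff.2 ⟨huv, h.toWalk, by simp [h.ne], by simpa using hr, ?_⟩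
  simp +contextual

theorem mem_reachSet_of_adj_of_adj {w : V} (hr : 2 ≤ r) (huv : u < v) (hwu : w < u)
    (huw : G.Adj u w) (hwv : G.Adj w v) : v ∈ reachSet G σ r u := by
  refine mem_reachSet_iff.2 ⟨huv, .cons huw hwv.toWalk, ?_, by simpa using hr, ?_⟩
  · simp [huw.ne, hwv.ne, huv.ne]
  · simp +contextual [hwu]

/-- The first vertex above `u` along a path from `u` is reached from `u` along that path. -/
theorem exists_mem_support_mem_reachSet_length {p : G.Walk u v} (hp : p.IsPath)
    (huv : u < v) : ∃ x ∈ p.support, x ∈ reachSet G σ p.length u := by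
  induction h : p.length using Nat.strong_induction_on generalizing v with
  | _ n ih =>
    by_cases hint : ∀ w ∈ p.support, w ≠ u → w ≠ v → w < u
    · exact ⟨v, p.end_mem_support, huv, p, hp, h.le, hint⟩
    push Not at hint
    obtain ⟨w, hw, hwu, hwv, huw⟩ := hint
    have hlt : (p.takeUntil w hw).length < n := h ▸ Walk.length_takeUntil_lt_length hw hwv
    obtain ⟨x, hx, hreach⟩ := ih _ hlt (hp.takeUntil hw) (huw.lt_of_ne hwu.symm) rfl
    exact ⟨x, Walk.support_takeUntil_subset_support p hw hx, reachSet_mono hlt.le hreach⟩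

theorem exists_mem_support_mem_reachSet {p : G.Walk u v} (hp : p.IsPath) (hlen : p.length ≤ r)
    {w : V} (hw : w ∈ p.support) (huw : u < w) :
    ∃ x ∈ p.support, x ∈ reachSet G σ r u := by
  obtain ⟨x, hx, hreach⟩ := exists_mem_support_mem_reachSet_length (hp.takeUntil hw) huw
  exact ⟨x, Walk.support_takeUntil_subset_support p hw hx,
    reachSet_mono ((Walk.length_takeUntil_le_length p hw).trans hlen) hreach⟩

theorem card_le_colOrd_of_subset_reachSet [Fintype V] {S : Finset V}
    (hS : ↑S ⊆ reachSet G σ r u) : S.card ≤ colOrd G σ r :=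
  calc S.card = (S : Set V).ncard := (Set.ncard_coe_finset S).symm
    _ ≤ (reachSet G σ r u).ncard := Set.ncard_le_ncard hS (Set.toFinite _)
    _ ≤ colOrd G σ r :=
      Finset.le_sup (f := fun u => (reachSet G σ r u).ncard) (Finset.mem_univ u)

end Reach

abbrev TC3SAT.Occurrence (φ : TC3SAT) : Type :=
  Σ i : Fin φ.m, {l : Fin φ.n × Bool // l ∈ φ.clauses i}

namespace GC

variable {r : ℕ} {φ : TC3SAT}

theorem adj_iff {a b : VtxC r φ} :
    (GC r φ).Adj a b ↔ a ≠ b ∧ (relC r φ a b ∨ relC r φ b a) :=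
  fromRel_adj _ a b

theorem adj_w_w {t t' : Fin 7} (h : t ≠ t') : (GC r φ).Adj (.w t) (.w t') :=
  adj_iff.2 ⟨by simpa using h, Or.inl trivial⟩

theorem adj_u_w {i : Fin φ.m} {t : Fin 7}
    (h : (t : ℕ) ≤ 3 ∨ ((t : ℕ) = 4 ∧ (φ.clauses i).card = 2)) :
    (GC r φ).Adj (.u i) (.w t) :=
  adj_iff.2 ⟨by simp, Or.inl h⟩

theorem adj_v_v {j : Fin φ.n} {b b' : Bool} (h : b ≠ b') : (GC r φ).Adj (.v j b) (.v j b') :=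
  adj_iff.2 ⟨by simpa using h, Or.inl rfl⟩

theorem adj_v_w_iff {j : Fin φ.n} {b : Bool} {t : Fin 7} :
    (GC r φ).Adj (.v j b) (.w t) ↔
      (b = true ∧ 1 ≤ (t : ℕ) ∧ (t : ℕ) ≤ 3) ∨
        (b = false ∧ 4 ≤ (t : ℕ) ∧ (t : ℕ) ≤ 6) := by
  rw [adj_iff]
  simp only [relC]
  simp

theorem adj_v_w_or_adj_v_w (j : Fin φ.n) (b : Bool) {t : Fin 7} (ht : t ≠ 0) :
    (GC r φ).Adj (.v j b) (.w t) ∨ (GC r φ).Adj (.v j !b) (.w t) := by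
  have : (t : ℕ) ≠ 0 := fun h => ht (Fin.ext h)
  simp only [adj_v_w_iff]
  cases b <;> simp <;> omega

theorem card_filter_add_card_clauses (i : Fin φ.m) :
    (Finset.univ.filter fun t : Fin 7 =>
        (t : ℕ) ≤ 3 ∨ ((t : ℕ) = 4 ∧ (φ.clauses i).card = 2)).card +
      (φ.clauses i).card = 7 := by
  have h2 := φ.clause_ge_two i
  have h3 := φ.clause_le_three i
  obtain hc | hc : (φ.clauses i).card = 2 ∨ (φ.clauses i).card = 3 := by omega
  all_goals rw [hc]; decide

/-- `subdiv r occ k` is the vertex at distance `k` from the clause vertex on the subdivided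
edge of the occurrence `occ`; the literal vertex sits at every `k ≥ r`. -/
def subdiv (r : ℕ) (occ : φ.Occurrence) : ℕ → VtxC r φ
  | 0 => .u occ.1
  | k + 1 => if h : k < r - 1 then .s occ ⟨k, h⟩ else .v occ.2.1.1 occ.2.1.2

variable {occ occ' : φ.Occurrence}

theorem subdiv_self (hr : 1 ≤ r) : subdiv r occ r = .v occ.2.1.1 occ.2.1.2 := by
  obtain ⟨k, rfl⟩ : ∃ k, r = k + 1 := ⟨r - 1, by omega⟩
  simp [subdiv]

theorem subdiv_ne_w (k : ℕ) (t : Fin 7) : subdiv r occ k ≠ .w t := by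
  cases k with
  | zero => simp [subdiv]
  | succ k => simp only [subdiv]; split <;> simp

theorem adj_subdiv_succ (hr : 2 ≤ r) {k : ℕ} (hk : k < r) :
    (GC r φ).Adj (subdiv r occ k) (subdiv r occ (k + 1)) := by
  rw [adj_iff]
  cases k with
  | zero => simp [subdiv, show 0 < r - 1 by omega, relC]
  | succ k =>
    by_cases hk' : k + 1 < r - 1
    · simp [subdiv, hk', show k < r - 1 by omega, relC]
    · simp [subdiv, hk', show k < r - 1 by omega, relC]
      omega

theorem subdiv_injOn : Set.InjOn (subdiv r occ) (Set.Iic r) := by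
  rintro (_ | a) ha (_ | b) hb hab <;> simp only [Set.mem_Iic, subdiv] at ha hb hab
  · rfl
  all_goals split_ifs at hab <;> simp_all <;> omega

theorem eq_of_subdiv_succ_eq (hi : occ.1 = occ'.1) {k k' : ℕ}
    (h : subdiv r occ (k + 1) = subdiv r occ' (k' + 1)) : occ = occ' := by
  obtain ⟨i, l, hl⟩ := occ
  obtain ⟨i', l', hl'⟩ := occ'
  obtain rfl : i = i' := hi
  simp only [subdiv] at h
  split_ifs at h <;> simp_all [Prod.ext_iff]

theorem exists_isPath_subdiv (hr : 2 ≤ r) (occ : φ.Occurrence) :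
    ∃ p : (GC r φ).Walk (.u occ.1) (.v occ.2.1.1 occ.2.1.2), p.IsPath ∧ p.length = r ∧
      ∀ x ∈ p.support, ∃ k ≤ r, subdiv r occ k = x := by
  rw [← subdiv_self (by omega)]
  exact exists_isPath_of_adj_succ (subdiv r occ) r (fun _ => adj_subdiv_succ hr) subdiv_injOn

section Order

variable [σ : LinearOrder (VtxC r φ)]

theorem exists_eq_w_of_mem_reachSet (hσ : colOrd (GC r φ) σ r ≤ 6) {z e : VtxC r φ}
    (t₀ : Fin 7) (hw : ∀ t ≠ t₀, .w t ∈ reachSet (GC r φ) σ r z)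
    (he : e ∈ reachSet (GC r φ) σ r z) :
    ∃ t, e = .w t := by
  by_contra! hne
  set S := insert e ((Finset.univ.erase t₀).image VtxC.w)
  have hcard : S.card = 7 := by
    rw [Finset.card_insert_of_notMem (by simpa using fun t _ => (hne t).symm),
      Finset.card_image_of_injective _ fun _ _ => VtxC.w.inj]
    simp
  have hsub : ↑S ⊆ reachSet (GC r φ) σ r z := by
    intro x hx
    simp only [S, Finset.coe_insert, Finset.coe_image, Finset.coe_erase, Finset.coe_univ,
      Set.mem_insert_iff, Set.mem_image] at hx
    rcases hx with rfl | ⟨t, ht, rfl⟩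
    exacts [he, hw t ht.2]
  have := card_le_colOrd_of_subset_reachSet hsub
  omega

theorem exists_eq_w_of_mem_reachSet_w_min (hr : 1 ≤ r) (hσ : colOrd (GC r φ) σ r ≤ 6)
    {t₀ : Fin 7} (hmin : ∀ t, (.w t₀ : VtxC r φ) ≤ .w t) {e : VtxC r φ}
    (he : e ∈ reachSet (GC r φ) σ r (.w t₀)) : ∃ t, e = .w t :=
  exists_eq_w_of_mem_reachSet hσ t₀ (fun t ht =>
    mem_reachSet_of_adj hr ((hmin t).lt_of_ne (by simpa using ht.symm)) (adj_w_w ht.symm)) he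

theorem exists_eq_w_of_mem_reachSet_v (hr : 2 ≤ r) (hσ : colOrd (GC r φ) σ r ≤ 6)
    {j : Fin φ.n} {b : Bool} (hyx : (.v j (!b) : VtxC r φ) < .v j b)
    (hxw : ∀ t, (.v j b : VtxC r φ) < .w t)
    {e : VtxC r φ} (he : e ∈ reachSet (GC r φ) σ r (.v j b)) : ∃ t, e = .w t := by
  refine exists_eq_w_of_mem_reachSet hσ 0 (fun t ht => ?_) he
  rcases adj_v_w_or_adj_v_w j b ht with hadj | hadj
  · exact mem_reachSet_of_adj (by omega) (hxw t) hadj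
  · exact mem_reachSet_of_adj_of_adj hr (hxw t) hyx (adj_v_v (by simp)) hadj

theorem exists_subdiv_succ_mem_reachSet_u (hr : 2 ≤ r) (occ : φ.Occurrence)
    (h : (.u occ.1 : VtxC r φ) < .v occ.2.1.1 occ.2.1.2) :
    ∃ k, subdiv r occ (k + 1) ∈ reachSet (GC r φ) σ r (.u occ.1) := by
  obtain ⟨p, hp, hlen, hsupp⟩ := exists_isPath_subdiv hr occ
  obtain ⟨x, hx, hreach⟩ := exists_mem_support_mem_reachSet hp hlen.le p.end_mem_support h
  obtain ⟨_ | k, -, rfl⟩ := hsupp x hx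
  · exact absurd hreach.1 (lt_irrefl _)
  · exact ⟨k, hreach⟩

theorem exists_mem_reachSet_v_ne_w (hr : 2 ≤ r) (occ : φ.Occurrence)
    (h : (.v occ.2.1.1 occ.2.1.2 : VtxC r φ) < .u occ.1) :
    ∃ e ∈ reachSet (GC r φ) σ r (.v occ.2.1.1 occ.2.1.2), ∀ t, e ≠ .w t := by
  obtain ⟨p, hp, hlen, hsupp⟩ := exists_isPath_subdiv hr occ
  obtain ⟨x, hx, hreach⟩ := exists_mem_support_mem_reachSet hp.reverse
    (p.length_reverse.trans hlen).le p.reverse.end_mem_support h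
  obtain ⟨k, -, rfl⟩ := hsupp x (by simpa using hx)
  exact ⟨_, hreach, subdiv_ne_w k⟩

theorem exists_w_lt_u_or_exists_v_lt_u (hr : 2 ≤ r) (hσ : colOrd (GC r φ) σ r ≤ 6)
    (i : Fin φ.m) :
    (∃ t, (.w t : VtxC r φ) < .u i) ∨
      ∃ l ∈ φ.clauses i, (.v l.1 l.2 : VtxC r φ) < .u i := by
  by_contra! h
  obtain ⟨hw, hv⟩ := h
  have hreach (l : φ.clauses i) :
      ∃ k, subdiv r ⟨i, l⟩ (k + 1) ∈ reachSet (GC r φ) σ r (.u i) :=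
    exists_subdiv_succ_mem_reachSet_u hr ⟨i, l⟩ ((hv l l.2).lt_of_ne (by simp))
  choose f hf using hreach
  set W := (Finset.univ.filter fun t : Fin 7 =>
    (t : ℕ) ≤ 3 ∨ ((t : ℕ) = 4 ∧ (φ.clauses i).card = 2)).image (VtxC.w (r := r))
  set P := (φ.clauses i).attach.image fun l => subdiv r ⟨i, l⟩ (f l + 1)
  have hW : W.card + (φ.clauses i).card = 7 := by
    rw [Finset.card_image_of_injective _ fun _ _ => VtxC.w.inj]
    exact card_filter_add_card_clauses i
  have hP : P.card = (φ.clauses i).card := by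
    rw [Finset.card_image_of_injective _ fun l l' h => by
        simpa using eq_of_subdiv_succ_eq (occ := ⟨i, l⟩) (occ' := ⟨i, l'⟩) rfl h,
      Finset.card_attach]
  have hdisj : Disjoint W P := by
    simp only [W, P, Finset.disjoint_left, Finset.mem_image]
    rintro _ ⟨t, -, rfl⟩ ⟨l, -, h⟩
    exact subdiv_ne_w _ t h
  have hsub : ↑(W ∪ P) ⊆ reachSet (GC r φ) σ r (.u i) := by
    intro x hx
    simp only [W, P, Finset.coe_union, Finset.coe_image, Set.mem_union, Set.mem_image,
      Finset.coe_filter, Finset.mem_univ, true_and, Set.mem_ofPred_eq, Finset.mem_coe] at hx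
    rcases hx with ⟨t, ht, rfl⟩ | ⟨l, -, rfl⟩
    · exact mem_reachSet_of_adj (by omega) ((hw t).lt_of_ne (by simp)) (adj_u_w ht)
    · exact hf l
  have := card_le_colOrd_of_subset_reachSet hsub
  rw [Finset.card_union_of_disjoint hdisj] at this
  omega

theorem not_v_lt_u_of_v_lt_w (hr : 2 ≤ r) (hσ : colOrd (GC r φ) σ r ≤ 6) {i : Fin φ.m}
    {l : Fin φ.n × Bool} (hl : l ∈ φ.clauses i)
    (hyx : (.v l.1 (!l.2) : VtxC r φ) < .v l.1 l.2)
    (hxw : ∀ t, (.v l.1 l.2 : VtxC r φ) < .w t) : ¬ (.v l.1 l.2 : VtxC r φ) < .u i := by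
  intro hxu
  obtain ⟨e, he, hne⟩ := exists_mem_reachSet_v_ne_w hr ⟨i, l, hl⟩ hxu
  obtain ⟨t, rfl⟩ := exists_eq_w_of_mem_reachSet_v hr hσ hyx hxw he
  exact hne t rfl

theorem not_w_lt_u_of_w_lt_v (hr : 2 ≤ r) (hσ : colOrd (GC r φ) σ r ≤ 6) {t₀ : Fin 7}
    (hmin : ∀ t, (.w t₀ : VtxC r φ) ≤ .w t) {i : Fin φ.m} {j : Fin φ.n} {b : Bool}
    (hmx : (.w t₀ : VtxC r φ) < .v j b) :
    ¬ (.w t₀ : VtxC r φ) < .u i := by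
  intro hmu
  have hw {e : VtxC r φ} := exists_eq_w_of_mem_reachSet_w_min (by omega) hσ hmin (e := e)
  by_cases hx : (GC r φ).Adj (.w t₀) (.v j b)
  · obtain ⟨t, ht⟩ := hw (mem_reachSet_of_adj (by omega) hmx hx)
    cases ht
  -- `w 0` is adjacent to no literal vertex, but to every clause vertex.
  obtain rfl | ht₀ := eq_or_ne t₀ 0
  · obtain ⟨t, ht⟩ := hw (mem_reachSet_of_adj (by omega) hmu (adj_u_w (Or.inl (by simp))).symm)
    cases ht
  have hy : (GC r φ).Adj (.w t₀) (.v j !b) :=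
    ((adj_v_w_or_adj_v_w j b ht₀).resolve_left fun h => hx h.symm).symm
  rcases lt_or_gt_of_ne (show (.w t₀ : VtxC r φ) ≠ .v j !b by simp) with hmy | hym
  · obtain ⟨t, ht⟩ := hw (mem_reachSet_of_adj (by omega) hmy hy)
    cases ht
  · obtain ⟨t, ht⟩ := hw (mem_reachSet_of_adj_of_adj hr hmx hym hy (adj_v_v (by simp)))
    cases ht

theorem u_lt_w_and_u_lt_v (hr : 2 ≤ r) (hσ : colOrd (GC r φ) σ r ≤ 6) {t₀ : Fin 7}
    (hmin : ∀ t, (.w t₀ : VtxC r φ) ≤ .w t) {i : Fin φ.m} {l : Fin φ.n × Bool}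
    (hl : l ∈ φ.clauses i) (hyx : (.v l.1 (!l.2) : VtxC r φ) < .v l.1 l.2) :
    (.u i : VtxC r φ) < .w t₀ ∧ (.u i : VtxC r φ) < .v l.1 l.2 := by
  rcases lt_or_gt_of_ne (show (.v l.1 l.2 : VtxC r φ) ≠ .w t₀ by simp) with hxm | hmx
  · have hux := (not_lt.1 (not_v_lt_u_of_v_lt_w hr hσ hl hyx fun t =>
      hxm.trans_le (hmin t))).lt_of_ne (by simp)
    exact ⟨hux.trans hxm, hux⟩
  · have hum := (not_lt.1 (not_w_lt_u_of_w_lt_v (i := i) hr hσ hmin hmx)).lt_of_ne (by simp)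
    exact ⟨hum, hum.trans hmx⟩

theorem v_lt_v_of_decide_ne {j : Fin φ.n} {b : Bool}
    (h : decide ((.v j true : VtxC r φ) < .v j false) ≠ b) :
    (.v j (!b) : VtxC r φ) < .v j b := by
  cases b
  · simpa using h
  · exact (not_lt.1 (by simpa using h)).lt_of_ne (by simp)

theorem sat_of_colOrd_le_six (hr : 2 ≤ r) (hσ : colOrd (GC r φ) σ r ≤ 6) :
    φ.Sat fun j => decide ((.v j true : VtxC r φ) < .v j false) := by
  intro i
  by_contra! hfalse
  obtain ⟨t₀, -, hmin⟩ :=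
    Finset.exists_min_image Finset.univ (fun t => (.w t : VtxC r φ)) Finset.univ_nonempty
  have hu {l} (hl : l ∈ φ.clauses i) :=
    u_lt_w_and_u_lt_v hr hσ (fun t => hmin t (Finset.mem_univ t)) hl
      (v_lt_v_of_decide_ne (hfalse l hl))
  rcases exists_w_lt_u_or_exists_v_lt_u hr hσ i with ⟨t, hwu⟩ | ⟨l, hl, hvu⟩
  · obtain ⟨l, hl⟩ := Finset.card_pos.1 (lt_of_lt_of_le two_pos (φ.clause_ge_two i))
    exact ((hmin t (Finset.mem_univ t)).trans_lt hwu).not_gt (hu hl).1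
  · exact hvu.not_gt (hu hl).2

end Order

end GC

/-- If (for `r ≥ 2`) the reduction graph `G(φ)` has `r`-coloring number at most 6, then
`φ` has a satisfying assignment; specifically, for any witnessing order `σ`, the
assignment setting `x_j` true iff `v_j <_σ v'_j` satisfies `φ`. -/
theorem colr_le_six_implies_sat (r : ℕ) (hr : 2 ≤ r) (φ : TC3SAT)
    (h : colNum (GC r φ) r ≤ 6) :
    φ.Satisfiable ∧
      ∀ σ : LinearOrder (VtxC r φ), colOrd (GC r φ) σ r ≤ 6 →
        φ.Sat fun j =>
          @decide (σ.lt (VtxC.v j true) (VtxC.v j false)) (σ.toDecidableLT _ _) := by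
  have hsat (σ : LinearOrder (VtxC r φ)) (hσ : colOrd (GC r φ) σ r ≤ 6) :=
    GC.sat_of_colOrd_le_six (σ := σ) hr hσ
  obtain ⟨σ, hσ⟩ := exists_colOrd_eq_colNum (GC r φ) r
  exact ⟨⟨_, hsat σ (hσ.trans_le h)⟩, hsat⟩
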